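/- For the quaternions $\mathbb{H}$ with its standard Euclidean inner product, if $u, w \in \mathbb{H}$ are orthogonal unit quaternions and $x, y \in \mathbb{H}$ are arbitrary unit quaternions, then $\langle xu, yw \rangle = -\langle xw, yu \rangle$. -/

import Mathlib

open scoped Quaternion

/-! Since `w * star u` is the conjugate of `u * star w`, their sum is the real number
`2 ⟪u, w⟫`. Hence `⟪x u, y w⟫ + ⟪x w, y u⟫ = Re (x (u w̄ + w ū) ȳ) = 2 ⟪x, y⟫ ⟪u, w⟫`, which
vanishes when `u ⊥ w`. -/

namespace Quaternion

theorem mul_star_add_mul_star_eq_coe (u w : ℍ[ℝ]) :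
    u * star w + w * star u = ((2 * inner ℝ u w : ℝ) : ℍ[ℝ]) := by
  rw [inner_def, ← self_add_star', star_mul, star_star]

theorem inner_mul_add_inner_mul (x y u w : ℍ[ℝ]) :
    inner ℝ (x * u) (y * w) + inner ℝ (x * w) (y * u) = 2 * inner ℝ x y * inner ℝ u w := by
  have h : x * u * star (y * w) + x * w * star (y * u) = (2 * inner ℝ u w) • (x * star y) := by
    rw [star_mul, star_mul, mul_assoc, mul_assoc, ← mul_assoc u, ← mul_assoc w, ← mul_add,
      ← add_mul, mul_star_add_mul_star_eq_coe, coe_mul_eq_smul, mul_smul_comm]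
  rw [inner_def, inner_def, ← re_add, h, re_smul, smul_eq_mul, ← inner_def]
  ring

end Quaternion

theorem quaternion_inner_antisymm_general
    (u w x y : ℍ[ℝ])
    (huw : (inner ℝ u w : ℝ) = 0) :
    (inner ℝ (x * u) (y * w) : ℝ) = -(inner ℝ (x * w) (y * u) : ℝ) := by
  have h := Quaternion.inner_mul_add_inner_mul x y u w
  rw [huw, mul_zero] at h
  exact eq_neg_of_add_eq_zero_left h

/-- For the quaternions with their standard Euclidean inner product, if `u, w`
are orthogonal unit quaternions and `x, y` are arbitrary unit quaternions,
then `⟨x*u, y*w⟩ = -⟨x*w, y*u⟩`. -/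
theorem quaternion_inner_antisymm
    (u w x y : ℍ[ℝ]) (hu : ‖u‖ = 1) (hw : ‖w‖ = 1)
    (huw : (inner ℝ u w : ℝ) = 0) (hx : ‖x‖ = 1) (hy : ‖y‖ = 1) :
    (inner ℝ (x * u) (y * w) : ℝ) = -(inner ℝ (x * w) (y * u) : ℝ) :=
  quaternion_inner_antisymm_general u w x y huw
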